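/- Let d ≥ 1, let α ∈ (0,∞)^d be a location parameter, and let G_1,…,G_d be i.i.d. real random variables with the standard Gumbel distribution. For each temperature τ > 0 define X_k(τ) = exp((log α_k + G_k)/τ) / Σ_{i=1}^d exp((log α_i + G_i)/τ). Then for every k ∈ {1,…,d}, the probability of the event that lim_{τ→0⁺} X_k(τ) = 1 equals α_k / Σ_{i=1}^d α_i. (Proposition 1, part 2: zero-temperature property.) -/

import Mathlib

/-!
At zero temperature the softmax `X k τ` tends to `1` exactly when `log α k + G k` is the strict
maximum of the perturbed logits; otherwise it stays at most `1/2`. That this strict maximum sits at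
`k` has probability `α k / ∑ i, α i` by the Gumbel-max trick: conditioning on `G k = z`,
independence gives probability `exp (-R e^{-z})` with `R = ∑_{i ≠ k} α i / α k`, and integrating
against the Gumbel density `exp (-z - e^{-z})` yields `1 / (1 + R)` because
`c⁻¹ exp (-c e^{-z})` is an antiderivative of `exp (-z - c e^{-z})`.
-/

open MeasureTheory ProbabilityTheory Real Filter Topology Set

theorem integrable_deriv_of_nonneg {g g' : ℝ → ℝ} {l m : ℝ}
    (hderiv : ∀ x, HasDerivAt g (g' x) x) (hg' : ∀ x, 0 ≤ g' x)
    (hbot : Tendsto g atBot (𝓝 m)) (htop : Tendsto g atTop (𝓝 l)) : Integrable g' := by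
  rw [← integrableOn_univ, ← Iio_union_Ici (a := (0 : ℝ)), integrableOn_union,
    integrableOn_Ici_iff_integrableOn_Ioi]
  refine ⟨?_, integrableOn_Ioi_deriv_of_nonneg' (fun x _ => hderiv x) (fun x _ => hg' x) htop⟩
  rw [← (Measure.measurePreserving_neg volume).integrableOn_comp_preimage
    (Homeomorph.neg ℝ).measurableEmbedding]
  simp only [neg_preimage, neg_Iio, neg_zero]
  refine integrableOn_Ioi_deriv_of_nonneg' (g := fun x => -g (-x)) (fun x _ => ?_)
    (fun x _ => hg' _) (hbot.comp tendsto_neg_atTop_atBot).neg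
  simpa using ((hderiv (-x)).comp x (hasDerivAt_neg x)).fun_neg

section GumbelIntegrals

variable {c : ℝ}

theorem hasDerivAt_inv_mul_exp_neg_mul_exp_neg (hc : c ≠ 0) (t : ℝ) :
    HasDerivAt (fun t => c⁻¹ * exp (-c * exp (-t))) (exp (-t - c * exp (-t))) t := by
  have h := (((hasDerivAt_neg t).exp.const_mul (-c)).exp).const_mul c⁻¹
  refine h.congr_deriv ?_
  rw [sub_eq_add_neg, exp_add]
  field_simp

theorem tendsto_exp_neg_mul_exp_neg_atBot (hc : 0 < c) :
    Tendsto (fun t => exp (-c * exp (-t))) atBot (𝓝 0) :=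
  tendsto_exp_atBot.comp <| (tendsto_const_mul_atBot_of_neg (neg_neg_of_pos hc)).2 <|
    tendsto_exp_atTop.comp tendsto_neg_atBot_atTop

theorem tendsto_exp_neg_mul_exp_neg_atTop (c : ℝ) :
    Tendsto (fun t => exp (-c * exp (-t))) atTop (𝓝 1) := by
  have h : Tendsto (fun t => -c * exp (-t)) atTop (𝓝 (-c * 0)) :=
    (tendsto_exp_atBot.comp tendsto_neg_atTop_atBot).const_mul (-c)
  simpa [Function.comp_def] using (continuous_exp.tendsto _).comp h

theorem integrable_exp_neg_sub_mul_exp_neg (hc : 0 < c) :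
    Integrable fun t => exp (-t - c * exp (-t)) :=
  integrable_deriv_of_nonneg (hasDerivAt_inv_mul_exp_neg_mul_exp_neg hc.ne')
    (fun _ => (exp_pos _).le) ((tendsto_exp_neg_mul_exp_neg_atBot hc).const_mul c⁻¹)
    ((tendsto_exp_neg_mul_exp_neg_atTop c).const_mul c⁻¹)

theorem integral_Iic_exp_neg_sub_mul_exp_neg (hc : 0 < c) (x : ℝ) :
    ∫ t in Iic x, exp (-t - c * exp (-t)) = c⁻¹ * exp (-c * exp (-x)) := by
  have h := integral_Iic_of_hasDerivAt_of_tendsto' (a := x)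
    (fun t _ => hasDerivAt_inv_mul_exp_neg_mul_exp_neg hc.ne' t)
    (integrable_exp_neg_sub_mul_exp_neg hc).integrableOn
    ((tendsto_exp_neg_mul_exp_neg_atBot hc).const_mul c⁻¹)
  simpa using h

theorem lintegral_exp_neg_sub_mul_exp_neg (hc : 0 < c) :
    ∫⁻ t, ENNReal.ofReal (exp (-t - c * exp (-t))) = ENNReal.ofReal c⁻¹ := by
  rw [← ofReal_integral_eq_lintegral_ofReal (integrable_exp_neg_sub_mul_exp_neg hc)
    (ae_of_all _ fun _ => (exp_pos _).le), integral_of_hasDerivAt_of_tendsto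
    (hasDerivAt_inv_mul_exp_neg_mul_exp_neg hc.ne') (integrable_exp_neg_sub_mul_exp_neg hc)
    ((tendsto_exp_neg_mul_exp_neg_atBot hc).const_mul c⁻¹)
    ((tendsto_exp_neg_mul_exp_neg_atTop c).const_mul c⁻¹)]
  simp

end GumbelIntegrals

noncomputable def gumbelMeasure : Measure ℝ :=
  volume.withDensity fun t => ENNReal.ofReal (exp (-t - exp (-t)))

instance : NullSingletonClass gumbelMeasure := by
  unfold gumbelMeasure; infer_instance

theorem gumbelMeasure_Iic (x : ℝ) : gumbelMeasure (Iic x) = ENNReal.ofReal (exp (-exp (-x))) := by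
  have hint := (integrable_exp_neg_sub_mul_exp_neg one_pos).integrableOn (s := Iic x)
  have h := integral_Iic_exp_neg_sub_mul_exp_neg one_pos x
  simp only [one_mul, inv_one] at hint h
  rw [gumbelMeasure, withDensity_apply _ measurableSet_Iic, ← ofReal_integral_eq_lintegral_ofReal
    hint (ae_of_all _ fun _ => (exp_pos _).le), h, neg_one_mul]

theorem gumbelMeasure_Iio (x : ℝ) : gumbelMeasure (Iio x) = ENNReal.ofReal (exp (-exp (-x))) := by
  rw [measure_congr Iio_ae_eq_Iic, gumbelMeasure_Iic]

theorem lintegral_exp_neg_mul_exp_neg_gumbelMeasure {R : ℝ} (hR : 0 ≤ R) :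
    ∫⁻ z, ENNReal.ofReal (exp (-R * exp (-z))) ∂gumbelMeasure = ENNReal.ofReal (1 + R)⁻¹ := by
  rw [gumbelMeasure, lintegral_withDensity_eq_lintegral_mul _ (by fun_prop) (by fun_prop),
    ← lintegral_exp_neg_sub_mul_exp_neg (by linarith : 0 < 1 + R)]
  refine lintegral_congr fun z => ?_
  rw [Pi.mul_apply, ← ENNReal.ofReal_mul (exp_pos _).le, ← exp_add]
  ring_nf

theorem map_eq_gumbelMeasure {Ω : Type*} [MeasurableSpace Ω] {μ : Measure Ω} [IsFiniteMeasure μ]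
    {X : Ω → ℝ} (hX : Measurable X)
    (hcdf : ∀ x, μ {ω | X ω ≤ x} = ENNReal.ofReal (exp (-exp (-x)))) :
    μ.map X = gumbelMeasure :=
  Measure.ext_of_Iic _ _ fun x => by
    rw [Measure.map_apply hX measurableSet_Iic, gumbelMeasure_Iic, ← hcdf]; rfl

section Softmax

variable {ι : Type*} [Fintype ι]

theorem exp_div_sum_exp_eq_inv_sum_exp_sub (v : ι → ℝ) (k : ι) (τ : ℝ) :
    exp (v k / τ) / ∑ i, exp (v i / τ) = (∑ i, exp ((v i - v k) / τ))⁻¹ := by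
  simp only [sub_div, exp_sub, ← Finset.sum_div, inv_div]

theorem tendsto_sum_exp_sub_div_nhdsGT_zero [DecidableEq ι] {v : ι → ℝ} {k : ι}
    (h : ∀ i ≠ k, v i < v k) :
    Tendsto (fun τ => ∑ i, exp ((v i - v k) / τ)) (𝓝[>] 0) (𝓝 1) := by
  rw [← Fintype.sum_ite_eq' k (fun _ => (1 : ℝ))]
  refine tendsto_finsetSum _ fun i _ => ?_
  rcases eq_or_ne i k with rfl | hik
  · simp
  · simp only [hik, if_false, div_eq_mul_inv]
    exact tendsto_exp_atBot.comp <| (tendsto_const_mul_atBot_of_neg (sub_neg.2 (h i hik))).2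
      tendsto_inv_nhdsGT_zero

theorem two_le_sum_exp_sub_div {v : ι → ℝ} {i k : ι} (hik : i ≠ k) (hle : v k ≤ v i) {τ : ℝ}
    (hτ : 0 < τ) : 2 ≤ ∑ j, exp ((v j - v k) / τ) := by
  have hi : 1 ≤ exp ((v i - v k) / τ) := one_le_exp (div_nonneg (sub_nonneg.2 hle) hτ.le)
  have hsum := Finset.add_le_sum (f := fun j => exp ((v j - v k) / τ))
    (fun j _ => (exp_pos _).le) (Finset.mem_univ k) (Finset.mem_univ i) hik.symm
  simp only [sub_self, zero_div, exp_zero] at hsum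
  linarith

theorem tendsto_exp_div_sum_exp_nhdsGT_zero_iff [DecidableEq ι] (v : ι → ℝ) (k : ι) :
    Tendsto (fun τ => exp (v k / τ) / ∑ i, exp (v i / τ)) (𝓝[>] 0) (𝓝 1) ↔
      ∀ i ≠ k, v i < v k := by
  simp only [exp_div_sum_exp_eq_inv_sum_exp_sub v k]
  refine ⟨fun h => ?_, fun h => by simpa using (tendsto_sum_exp_sub_div_nhdsGT_zero h).inv₀ one_ne_zero⟩
  by_contra! ⟨i, hik, hle⟩
  have hhalf : ∀ᶠ τ in 𝓝[>] 0, (∑ j, exp ((v j - v k) / τ))⁻¹ ≤ 2⁻¹ :=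
    eventually_mem_nhdsWithin.mono fun τ hτ =>
      inv_anti₀ two_pos (two_le_sum_exp_sub_div hik hle hτ)
  have := le_of_tendsto h hhalf
  norm_num at this

end Softmax

namespace ProbabilityTheory

theorem IndepFun.measure_preimage_prodMk {Ω α β : Type*} [MeasurableSpace Ω] [MeasurableSpace α]
    [MeasurableSpace β] {μ : Measure Ω} [IsFiniteMeasure μ] {X : Ω → α} {Y : Ω → β}
    (hXY : IndepFun X Y μ) (hX : Measurable X) (hY : Measurable Y) {C : Set (α × β)}
    (hC : MeasurableSet C) :
    μ ((fun ω => (X ω, Y ω)) ⁻¹' C) = ∫⁻ x, μ.map Y (Prod.mk x ⁻¹' C) ∂μ.map X := by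
  rw [← Measure.map_apply (hX.prodMk hY) hC,
    (indepFun_iff_map_prod_eq_prod_map_map hX.aemeasurable hY.aemeasurable).1 hXY,
    Measure.prod_apply hC]

section Gumbel

variable {ι Ω : Type*} [MeasurableSpace Ω] {μ : Measure Ω} [IsFiniteMeasure μ]
  {G : ι → Ω → ℝ}

theorem iIndepFun.measure_biInter_lt_add_gumbel (hGmeas : ∀ i, Measurable (G i))
    (hGindep : iIndepFun G μ)
    (hGcdf : ∀ i x, μ {ω | G i ω ≤ x} = ENNReal.ofReal (exp (-exp (-x))))
    (s : Finset ι) (b : ι → ℝ) (z : ℝ) :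
    μ (⋂ i ∈ s, {ω | G i ω < z + b i}) =
      ENNReal.ofReal (exp (-(∑ i ∈ s, exp (-b i)) * exp (-z))) := by
  have hIio : ∀ i x, μ {ω | G i ω < x} = ENNReal.ofReal (exp (-exp (-x))) := fun i x => by
    rw [← gumbelMeasure_Iio, ← map_eq_gumbelMeasure (hGmeas i) (hGcdf i),
      Measure.map_apply (hGmeas i) measurableSet_Iio]
    rfl
  rw [hGindep.meas_biInter (s := fun i => {ω | G i ω < z + b i})
      fun i _ => ⟨Iio (z + b i), measurableSet_Iio, rfl⟩,
    Finset.prod_congr rfl fun i _ => hIio i _,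
    ← ENNReal.ofReal_prod_of_nonneg fun i _ => (exp_pos _).le, ← exp_sum, neg_mul,
    Finset.sum_mul, ← Finset.sum_neg_distrib]
  congr 2
  refine Finset.sum_congr rfl fun i _ => ?_
  rw [← exp_add, neg_add, add_comm]

theorem iIndepFun.measure_forall_add_lt_add_gumbel [Fintype ι] [DecidableEq ι]
    (hGmeas : ∀ i, Measurable (G i)) (hGindep : iIndepFun G μ)
    (hGcdf : ∀ i x, μ {ω | G i ω ≤ x} = ENNReal.ofReal (exp (-exp (-x))))
    (a : ι → ℝ) (k : ι) :
    μ {ω | ∀ i ≠ k, a i + G i ω < a k + G k ω} =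
      ENNReal.ofReal (exp (a k) / ∑ i, exp (a i)) := by
  set s := Finset.univ.erase k
  let Y : Ω → s → ℝ := fun ω j => G j ω
  have hY : Measurable Y := measurable_pi_lambda _ fun j => hGmeas j
  have hindep : IndepFun (G k) Y μ := by
    exact (hGindep.indepFun_finset {k} s (by simp [s]) hGmeas).comp
      (measurable_pi_apply ⟨k, Finset.mem_singleton_self k⟩) measurable_id
  let C : Set (ℝ × (s → ℝ)) := {p | ∀ j, p.2 j < p.1 + (a k - a j)}
  have hC : MeasurableSet C := by
    simp only [C, ofPred_forall]
    exact .iInter fun j => measurableSet_lt ((measurable_pi_apply j).comp measurable_snd)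
      (measurable_fst.add_const _)
  have hevent : {ω | ∀ i ≠ k, a i + G i ω < a k + G k ω} = (fun ω => (G k ω, Y ω)) ⁻¹' C := by
    ext ω
    simp only [mem_ofPred_eq, mem_preimage, C, Y, Subtype.forall, s, Finset.mem_erase,
      Finset.mem_univ, and_true]
    exact forall₂_congr fun i _ => by constructor <;> intro h <;> linarith
  have hslice : ∀ z, μ.map Y (Prod.mk z ⁻¹' C) =
      ENNReal.ofReal (exp (-(∑ i ∈ s, exp (a i - a k)) * exp (-z))) := fun z => by
    have hpre : Y ⁻¹' (Prod.mk z ⁻¹' C) = ⋂ i ∈ s, {ω | G i ω < z + (a k - a i)} := by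
      ext ω
      simp [C, Y]
    simp only [Measure.map_apply hY (measurable_prodMk_left hC), hpre,
      hGindep.measure_biInter_lt_add_gumbel hGmeas hGcdf, neg_sub]
  have hsum : 1 + ∑ i ∈ s, exp (a i - a k) = (∑ i, exp (a i)) / exp (a k) := by
    rw [← exp_zero, ← sub_self (a k), Finset.add_sum_erase _ (fun i => exp (a i - a k))
      (Finset.mem_univ k), Finset.sum_div]
    simp only [exp_sub]
  rw [hevent, IndepFun.measure_preimage_prodMk hindep (hGmeas k) hY hC,
    map_eq_gumbelMeasure (hGmeas k) (hGcdf k), lintegral_congr hslice,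
    lintegral_exp_neg_mul_exp_neg_gumbelMeasure (Finset.sum_nonneg fun _ _ => (exp_pos _).le),
    hsum, inv_div]

end Gumbel

end ProbabilityTheory

theorem concrete_zero_temperature_general
    {Ω : Type*} [MeasureSpace Ω] [IsProbabilityMeasure (ℙ : Measure Ω)]
    (d : ℕ)
    (α : Fin d → ℝ) (hα : ∀ i, 0 < α i)
    (G : Fin d → Ω → ℝ)
    (hGmeas : ∀ i, Measurable (G i))
    (hGindep : iIndepFun G ℙ)
    (hGcdf : ∀ i x, ℙ {ω | G i ω ≤ x} = ENNReal.ofReal (Real.exp (-Real.exp (-x))))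
    (X : Fin d → ℝ → Ω → ℝ)
    (hX : ∀ k τ ω, X k τ ω =
      Real.exp ((Real.log (α k) + G k ω) / τ) /
        ∑ i, Real.exp ((Real.log (α i) + G i ω) / τ))
    (k : Fin d) :
    ℙ {ω | Tendsto (fun τ => X k τ ω) (𝓝[>] 0) (𝓝 1)} =
      ENNReal.ofReal (α k / ∑ i, α i) := by
  have hevent : {ω | Tendsto (fun τ => X k τ ω) (𝓝[>] 0) (𝓝 1)} =
      {ω | ∀ i ≠ k, log (α i) + G i ω < log (α k) + G k ω} := by
    ext ω
    simp only [hX]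
    exact tendsto_exp_div_sum_exp_nhdsGT_zero_iff (fun i => log (α i) + G i ω) k
  rw [hevent, hGindep.measure_forall_add_lt_add_gumbel hGmeas hGcdf]
  simp only [exp_log (hα _)]

/-- **Proposition 1, part 2 (zero-temperature property of the concrete random variable).**
Let `α ∈ (0,∞)^d` and let `G 1, …, G d` be i.i.d. standard Gumbel random variables
(CDF `x ↦ exp (-exp (-x))`).  For each temperature `τ > 0` put
`X k τ = exp ((log (α k) + G k)/τ) / ∑ i, exp ((log (α i) + G i)/τ)`.
Then for every `k`, the probability of the event that `X k τ → 1` as `τ → 0⁺`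
(pointwise, with the Gumbel samples fixed) equals `α k / ∑ i, α i`. -/
theorem concrete_zero_temperature
    {Ω : Type*} [MeasureSpace Ω] [IsProbabilityMeasure (ℙ : Measure Ω)]
    (d : ℕ) (hd : 1 ≤ d)
    (α : Fin d → ℝ) (hα : ∀ i, 0 < α i)
    (G : Fin d → Ω → ℝ)
    (hGmeas : ∀ i, Measurable (G i))
    (hGindep : iIndepFun G ℙ)
    (hGcdf : ∀ i x, ℙ {ω | G i ω ≤ x} = ENNReal.ofReal (Real.exp (-Real.exp (-x))))
    (X : Fin d → ℝ → Ω → ℝ)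
    (hX : ∀ k τ ω, X k τ ω =
      Real.exp ((Real.log (α k) + G k ω) / τ) /
        ∑ i, Real.exp ((Real.log (α i) + G i ω) / τ))
    (k : Fin d) :
    ℙ {ω | Tendsto (fun τ => X k τ ω) (𝓝[>] 0) (𝓝 1)} =
      ENNReal.ofReal (α k / ∑ i, α i) :=
  concrete_zero_temperature_general d α hα G hGmeas hGindep hGcdf X hX k
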